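/- Conversely, two queue types with the same multiset of entries that agree on the per-pair subsequence for every ordered pair of roles (p, q) are congruent: if for all (p,q) the subsequence of entries from p to q in Q equals that in Q', then Q ≡ Q'. -/

import Mathlib

/- Queue types of the Maty multiparty session type system.  A queue type is a
list of entries `p→q:ℓ⟨A⟩` (sender, receiver, label, payload type).  Queue
congruence is generated by swapping adjacent entries whose (sender, receiver)
pairs differ, closed under reflexivity, symmetry and transitivity. -/

abbrev Role := ℕ
abbrev Label := ℕ
abbrev Ty := ℕ

structure QEntry where
  sender : Role
  receiver : Role
  label : Label
  payload : Ty
deriving DecidableEq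

abbrev Queue := List QEntry

/-- One swap of adjacent entries with distinct (sender, receiver) pairs. -/
inductive QSwap : Queue → Queue → Prop
  | swap (Q₁ Q₂ : Queue) (e₁ e₂ : QEntry)
      (h : e₁.sender ≠ e₂.sender ∨ e₁.receiver ≠ e₂.receiver) :
      QSwap (Q₁ ++ e₁ :: e₂ :: Q₂) (Q₁ ++ e₂ :: e₁ :: Q₂)

/-- Queue congruence: reflexive-symmetric-transitive closure of `QSwap`. -/
def QCong : Queue → Queue → Prop := Relation.EqvGen QSwap

/-- The subsequence of entries sent from `p` to `q`, in order. -/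
def pairFilter (p q : Role) (Q : Queue) : Queue :=
  Q.filter (fun e => decide (e.sender = p ∧ e.receiver = q))

/- Induct on `Q'`. Its head `e` is the first entry of its pair in `Q'`, hence also in `Q`:
`Q = A ++ e :: B` with no entry of `A` in the pair of `e`. Then `e` can be swapped to the
front of `Q`, and what remains, `A ++ B`, again has the per-pair subsequences of the tail
of `Q'`, because swaps preserve them. -/

theorem pairFilter_cons (p q : Role) (e : QEntry) (Q : Queue) :
    pairFilter p q (e :: Q) =
      if e.sender = p ∧ e.receiver = q then e :: pairFilter p q Q else pairFilter p q Q := by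
  simp only [pairFilter, List.filter_cons, decide_eq_true_eq]

theorem eq_nil_of_forall_pairFilter_eq_nil {Q : Queue} (h : ∀ p q, pairFilter p q Q = []) :
    Q = [] :=
  List.eq_nil_iff_forall_not_mem.mpr fun x hx => by
    simpa [pairFilter] using List.filter_eq_nil_iff.mp (h x.sender x.receiver) x hx

theorem pairFilter_tail_eq_of_cons {e : QEntry} {L L' : Queue}
    (h : ∀ p q, pairFilter p q (e :: L) = pairFilter p q (e :: L')) (p q : Role) :
    pairFilter p q L = pairFilter p q L' := by
  have hpq := h p q
  simp only [pairFilter_cons] at hpq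
  split_ifs at hpq
  · exact List.cons_injective hpq
  · exact hpq

theorem QSwap.pairFilter_eq {L L' : Queue} (h : QSwap L L') (p q : Role) :
    pairFilter p q L = pairFilter p q L' := by
  obtain ⟨Q₁, Q₂, e₁, e₂, hne⟩ := h
  simp only [pairFilter, List.filter_append, List.filter_cons, decide_eq_true_eq]
  split_ifs with h₁ h₂ <;> try rfl
  exact absurd ⟨h₁.1.trans h₂.1.symm, h₁.2.trans h₂.2.symm⟩ (not_and_or.mpr hne)

theorem QCong.pairFilter_eq {L L' : Queue} (h : QCong L L') (p q : Role) :
    pairFilter p q L = pairFilter p q L' := by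
  induction h with
  | rel _ _ hswap => exact hswap.pairFilter_eq p q
  | refl => rfl
  | symm _ _ _ ih => exact ih.symm
  | trans _ _ _ _ _ ih₁ ih₂ => exact ih₁.trans ih₂

theorem QSwap.cons (a : QEntry) {L L' : Queue} (h : QSwap L L') : QSwap (a :: L) (a :: L') := by
  obtain ⟨Q₁, Q₂, e₁, e₂, hne⟩ := h
  exact QSwap.swap (a :: Q₁) Q₂ e₁ e₂ hne

theorem QCong.cons (a : QEntry) {L L' : Queue} (h : QCong L L') : QCong (a :: L) (a :: L') := by
  induction h with
  | rel _ _ hswap => exact .rel _ _ (hswap.cons a)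
  | refl => exact .refl _
  | symm _ _ _ ih => exact .symm _ _ ih
  | trans _ _ _ _ _ ih₁ ih₂ => exact .trans _ _ _ ih₁ ih₂

theorem qcong_append_cons {e : QEntry} (A B : Queue)
    (hA : ∀ x ∈ A, x.sender ≠ e.sender ∨ x.receiver ≠ e.receiver) :
    QCong (A ++ e :: B) (e :: (A ++ B)) := by
  induction A with
  | nil => exact .refl _
  | cons a A ih =>
    have hmove : QCong (a :: (A ++ e :: B)) (a :: e :: (A ++ B)) :=
      (ih fun x hx => hA x (List.mem_cons_of_mem a hx)).cons a
    exact .trans _ _ _ hmove (.rel _ _ (QSwap.swap [] (A ++ B) a e (hA a List.mem_cons_self)))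

theorem pairFilter_qcong_general (Q Q' : Queue)
    (hfil : ∀ p q : Role, pairFilter p q Q = pairFilter p q Q') :
    QCong Q Q' := by
  induction Q' generalizing Q with
  | nil => exact eq_nil_of_forall_pairFilter_eq_nil hfil ▸ .refl _
  | cons e Q' ih =>
    have hhead : pairFilter e.sender e.receiver Q = e :: pairFilter e.sender e.receiver Q' := by
      rw [hfil, pairFilter_cons, if_pos ⟨rfl, rfl⟩]
    obtain ⟨A, B, rfl, hA, -, -⟩ := List.filter_eq_cons_iff.mp hhead
    have hfront : QCong (A ++ e :: B) (e :: (A ++ B)) :=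
      qcong_append_cons A B fun x hx => not_and_or.mp (by simpa using hA x hx)
    have hrest : ∀ p q, pairFilter p q (A ++ B) = pairFilter p q Q' :=
      pairFilter_tail_eq_of_cons fun p q => (hfront.pairFilter_eq p q).symm.trans (hfil p q)
    exact .trans _ _ _ hfront ((ih (A ++ B) hrest).cons e)

/-- two queues with the same multiset of entries that agree on the
per-pair subsequence for every ordered pair of roles are congruent. -/
theorem pairFilter_qcong (Q Q' : Queue)
    (hperm : Q.Perm Q')
    (hfil : ∀ p q : Role, pairFilter p q Q = pairFilter p q Q') :
    QCong Q Q' :=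
  pairFilter_qcong_general Q Q' hfil
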